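/- Let n ≥ 1 be a natural number, m ≠ 0 a real number, and φ : ℝⁿ → ℝ a smooth function. Then, as an identity of 1-forms on ℝⁿ: δ_φ Ric_φ^m = (1/2)·d(R_φ^m) − (1/m)·(Δ_φ φ)·dφ. (This is the Bianchi identity, Proposition 4.3 of the paper, in the case of a flat background metric, where the Ricci curvature vanishes and all operators are the classical Euclidean ones.) -/

import Mathlib

open scoped RealInnerProductSpace

noncomputable section

set_option maxHeartbeats 1000000

variable {n : ℕ}

/-- The `i`-th standard basis vector of `ℝⁿ`. -/
def stdBasis (i : Fin n) : EuclideanSpace ℝ (Fin n) :=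
  EuclideanSpace.single i (1 : ℝ)

/-- The Euclidean Hessian of `u` at `x`, evaluated on `y`, `z`. -/
def hess (u : EuclideanSpace ℝ (Fin n) → ℝ)
    (x y z : EuclideanSpace ℝ (Fin n)) : ℝ :=
  fderiv ℝ (fderiv ℝ u) x y z

/-- The Euclidean Laplacian `Δu = tr (Hess u)`. -/
def lap (u : EuclideanSpace ℝ (Fin n) → ℝ) (x : EuclideanSpace ℝ (Fin n)) : ℝ :=
  ∑ i : Fin n, hess u x (stdBasis i) (stdBasis i)

/-- The flat-background Bakry–Émery Ricci tensor `Ric_φ^m = Hess φ − (1/m) dφ ⊗ dφ`. -/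
def bakryEmeryRic (m : ℝ) (φ : EuclideanSpace ℝ (Fin n) → ℝ)
    (x y z : EuclideanSpace ℝ (Fin n)) : ℝ :=
  hess φ x y z - (1 / m) * (fderiv ℝ φ x y) * (fderiv ℝ φ x z)

/-- The flat-background weighted scalar curvature `R_φ^m = 2Δφ − ((m+1)/m)|∇φ|²`. -/
def weightedScalar (m : ℝ) (φ : EuclideanSpace ℝ (Fin n) → ℝ)
    (x : EuclideanSpace ℝ (Fin n)) : ℝ :=
  2 * lap φ x - ((m + 1) / m) * ‖gradient φ x‖ ^ 2

/-- The weighted Laplacian `Δ_φ w = Δw − ⟨∇φ, ∇w⟩`. -/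
def weightedLap (φ w : EuclideanSpace ℝ (Fin n) → ℝ)
    (x : EuclideanSpace ℝ (Fin n)) : ℝ :=
  lap w x - ⟪gradient φ x, gradient w x⟫

/-- The weighted divergence of a 2-tensor field `T`, as a 1-form:
`(δ_φ T)(Z) = Σᵢ (∂_{eᵢ} T)(eᵢ, Z) − T(∇φ, Z)`. -/
def weightedDiv (φ : EuclideanSpace ℝ (Fin n) → ℝ)
    (T : EuclideanSpace ℝ (Fin n) → EuclideanSpace ℝ (Fin n) →
      EuclideanSpace ℝ (Fin n) → ℝ)
    (x Z : EuclideanSpace ℝ (Fin n)) : ℝ :=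
  (∑ i : Fin n, fderiv ℝ (fun p => T p (stdBasis i) Z) x (stdBasis i))
    - T x (gradient φ x) Z

lemma stdBasis_expand (v : EuclideanSpace ℝ (Fin n)) :
    v = ∑ i : Fin n, v i • stdBasis i := by
  ext j
  rw [show (∑ i : Fin n, v i • stdBasis i) j = ∑ i : Fin n, (v i • stdBasis i) j from
    by rw [WithLp.ofLp_sum]; exact Finset.sum_apply j Finset.univ _]
  simp [stdBasis, PiLp.smul_apply, EuclideanSpace.single_apply]

lemma clm_expand {F : Type*} [NormedAddCommGroup F] [NormedSpace ℝ F]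
    (L : EuclideanSpace ℝ (Fin n) →L[ℝ] F) (v : EuclideanSpace ℝ (Fin n)) :
    L v = ∑ i : Fin n, v i • L (stdBasis i) := by
  conv_lhs => rw [stdBasis_expand v]
  simp

lemma gradient_coord (φ : EuclideanSpace ℝ (Fin n) → ℝ)
    (p : EuclideanSpace ℝ (Fin n)) (i : Fin n) :
    gradient φ p i = fderiv ℝ φ p (stdBasis i) := by
  have h : ⟪gradient φ p, stdBasis i⟫ = fderiv ℝ φ p (stdBasis i) :=
    InnerProductSpace.toDual_symm_apply
  rw [← h, stdBasis, EuclideanSpace.inner_single_right]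
  simp

/-- Proposition 4.3 of the paper (flat background): the weighted Bianchi identity
`δ_φ Ric_φ^m = ½ d(R_φ^m) − (1/m)(Δ_φ φ) dφ` on Euclidean space. -/
theorem weighted_bianchi_identity (hn : 1 ≤ n) (m : ℝ) (hm : m ≠ 0)
    (φ : EuclideanSpace ℝ (Fin n) → ℝ) (hφ : ContDiff ℝ (⊤ : ℕ∞) φ) :
    ∀ x Z : EuclideanSpace ℝ (Fin n),
      weightedDiv φ (bakryEmeryRic m φ) x Z =
        (1 / 2) * fderiv ℝ (weightedScalar m φ) x Z
          - (1 / m) * weightedLap φ φ x * fderiv ℝ φ x Z := by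
  intro x Z
  have h1le : (1 : WithTop ℕ∞) ≤ ((⊤ : ℕ∞) : WithTop ℕ∞) := by exact_mod_cast le_top
  set f : EuclideanSpace ℝ (Fin n) → EuclideanSpace ℝ (Fin n) →L[ℝ] ℝ := fderiv ℝ φ with hf_def
  have hφ' : ContDiff ℝ ((⊤ : ℕ∞) : WithTop ℕ∞) φ := hφ.of_le (by simp)
  have hf : ContDiff ℝ ((⊤ : ℕ∞) : WithTop ℕ∞) f := (contDiff_infty_iff_fderiv.mp hφ').2
  set H : EuclideanSpace ℝ (Fin n) → EuclideanSpace ℝ (Fin n) →L[ℝ] (EuclideanSpace ℝ (Fin n) →L[ℝ] ℝ) := fderiv ℝ f with hH_def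
  have hH : ContDiff ℝ ((⊤ : ℕ∞) : WithTop ℕ∞) H := (contDiff_infty_iff_fderiv.mp hf).2
  -- pointwise derivative facts
  have hfd : ∀ p, HasFDerivAt φ (f p) p := fun p => (hφ'.differentiable (by simp) p).hasFDerivAt
  have hfd' : ∀ p, HasFDerivAt f (H p) p := fun p => (hf.differentiable (by simp) p).hasFDerivAt
  set T3 : EuclideanSpace ℝ (Fin n) →L[ℝ] EuclideanSpace ℝ (Fin n) →L[ℝ] EuclideanSpace ℝ (Fin n) →L[ℝ] ℝ := fderiv ℝ H x with hT3_def
  have hHx : HasFDerivAt H T3 x := (hH.differentiable (by simp) x).hasFDerivAt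
  -- symmetry of the second derivative
  have hsymm2 : ∀ p a b, H p a b = H p b a := fun p a b =>
    second_derivative_symmetric hfd (hfd' p) a b
  -- symmetry of the third derivative in the first two slots
  have hsymm12 : ∀ a b c, T3 a b c = T3 b a c := fun a b c =>
    congrFun (congrArg _ (second_derivative_symmetric hfd' hHx a b)) c
  -- evaluation derivative lemmas
  have hevalH : ∀ b c : EuclideanSpace ℝ (Fin n), HasFDerivAt (fun p => H p b c) ((T3.flip b).flip c) x := by
    intro b c
    have h1 : HasFDerivAt (fun p => H p b)
        ((H x).comp (0 : EuclideanSpace ℝ (Fin n) →L[ℝ] EuclideanSpace ℝ (Fin n)) + T3.flip b) x :=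
      hHx.clm_apply (hasFDerivAt_const b x)
    have h2 := h1.clm_apply (hasFDerivAt_const c x)
    refine h2.congr_fderiv ?_
    ext a
    rw [ContinuousLinearMap.add_apply]
    rw [ContinuousLinearMap.flip_apply, ContinuousLinearMap.add_apply]
    simp only [ContinuousLinearMap.comp_apply, ContinuousLinearMap.zero_apply, map_zero,
      ContinuousLinearMap.add_apply, ContinuousLinearMap.flip_apply, zero_add]
  have hevalf : ∀ v : EuclideanSpace ℝ (Fin n), HasFDerivAt (fun p => f p v) ((H x).flip v) x := by
    intro v
    have := (hfd' x).clm_apply (hasFDerivAt_const v x)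
    refine this.congr_fderiv ?_
    ext a
    simp
  -- symmetry of the third derivative in the last two slots
  have hsymm23 : ∀ a b c, T3 a b c = T3 a c b := by
    intro a b c
    have e1 : fderiv ℝ (fun p => H p b c) x a = T3 a b c := by
      rw [(hevalH b c).fderiv]; simp
    have e2 : fderiv ℝ (fun p => H p c b) x a = T3 a c b := by
      rw [(hevalH c b).fderiv]; simp
    rw [← e1, ← e2]
    congr 1
    exact congrArg (fun g => fderiv ℝ g x) (funext fun p => hsymm2 p b c)
  -- shorthand
  set e : Fin n → EuclideanSpace ℝ (Fin n) := stdBasis with he_def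
  set a : Fin n → ℝ := fun i => f x (e i) with ha_def
  set b : Fin n → ℝ := fun i => H x (e i) (e i) with hb_def
  set c : Fin n → ℝ := fun i => H x (e i) Z with hc_def
  set A : Fin n → ℝ := fun i => T3 (e i) (e i) Z with hA_def
  set z : ℝ := f x Z with hz_def
  -- gradient facts
  have hgrad : ∀ (L : EuclideanSpace ℝ (Fin n) →L[ℝ] ℝ), L (gradient φ x) = ∑ i, a i * L (e i) := by
    intro L
    rw [clm_expand L (gradient φ x)]
    refine Finset.sum_congr rfl fun i _ => ?_
    rw [gradient_coord, smul_eq_mul]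
  have hnormsq : ∀ p : EuclideanSpace ℝ (Fin n), ‖gradient φ p‖ ^ 2 = ∑ i, f p (e i) * f p (e i) := by
    intro p
    rw [← real_inner_self_eq_norm_sq]
    rw [show ⟪gradient φ p, gradient φ p⟫ = ∑ i, gradient φ p i * gradient φ p i from by
      rw [PiLp.inner_apply]; simp [PiLp.inner_apply, RCLike.inner_apply, conj_trivial, sq]]
    exact Finset.sum_congr rfl fun i _ => by rw [gradient_coord]
  -- derivative of the lap
  have hlap : fderiv ℝ (lap φ) x Z = ∑ i, A i := by
    have h1 : HasFDerivAt (lap φ) (∑ i, (T3.flip (e i)).flip (e i)) x := by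
      have : lap φ = fun p => ∑ i, H p (e i) (e i) := rfl
      rw [this]
      exact HasFDerivAt.fun_sum fun i _ => hevalH (e i) (e i)
    rw [h1.fderiv, ContinuousLinearMap.sum_apply]
    refine Finset.sum_congr rfl fun i _ => ?_
    simp only [ContinuousLinearMap.flip_apply]
    rw [hsymm12 Z (e i) (e i), hsymm23 (e i) Z (e i)]
  -- derivative of |∇φ|²
  have hnormderiv : fderiv ℝ (fun p => ‖gradient φ p‖ ^ 2) x Z = ∑ i, 2 * (a i * c i) := by
    have h1 : HasFDerivAt (fun p => ∑ i, f p (e i) * f p (e i))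
        (∑ i, (f x (e i) • (H x).flip (e i) + f x (e i) • (H x).flip (e i))) x :=
      HasFDerivAt.fun_sum fun i _ => (hevalf (e i)).mul (hevalf (e i))
    have h2 : (fun p => ‖gradient φ p‖ ^ 2) = fun p => ∑ i, f p (e i) * f p (e i) :=
      funext fun p => hnormsq p
    rw [h2, h1.fderiv]
    refine Eq.trans (ContinuousLinearMap.sum_apply _ _ _) ?_
    refine Finset.sum_congr rfl fun i _ => ?_
    simp only [ContinuousLinearMap.add_apply, ContinuousLinearMap.coe_smul',
      Pi.smul_apply, ContinuousLinearMap.flip_apply, smul_eq_mul]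
    rw [hsymm2 x Z (e i)]
    ring
  -- derivative of the weighted scalar
  have hws : fderiv ℝ (weightedScalar m φ) x Z
      = 2 * ∑ i, A i - ((m + 1) / m) * ∑ i, 2 * (a i * c i) := by
    have h3 : HasFDerivAt (weightedScalar m φ)
        ((2 : ℝ) • (∑ i, (T3.flip (e i)).flip (e i))
          - ((m + 1) / m) • (∑ i, (f x (e i) • (H x).flip (e i)
              + f x (e i) • (H x).flip (e i)))) x := by
      have hrw : weightedScalar m φ
          = fun p => 2 * (∑ i, H p (e i) (e i))
              - ((m + 1) / m) * ∑ i, f p (e i) * f p (e i) :=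
        funext fun p => by rw [show weightedScalar m φ p
            = 2 * (∑ i, H p (e i) (e i)) - ((m + 1) / m) * ‖gradient φ p‖ ^ 2 from rfl,
          hnormsq p]
      rw [hrw]
      exact ((HasFDerivAt.fun_sum fun i _ => hevalH (e i) (e i)).const_mul 2).sub
        ((HasFDerivAt.fun_sum fun i _ => (hevalf (e i)).mul (hevalf (e i))).const_mul _)
    rw [h3.fderiv]
    simp only [ContinuousLinearMap.sub_apply, ContinuousLinearMap.coe_smul',
      Pi.smul_apply, ContinuousLinearMap.sum_apply, ContinuousLinearMap.add_apply,
      ContinuousLinearMap.flip_apply, smul_eq_mul]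
    congr 1
    · congr 1
      refine Finset.sum_congr rfl fun i _ => ?_
      rw [hsymm12 Z (e i) (e i), hsymm23 (e i) Z (e i)]
    · congr 1
      refine Finset.sum_congr rfl fun i _ => ?_
      rw [hsymm2 x Z (e i)]
      ring
  -- derivative of the Ric components
  have hric : ∀ i : Fin n,
      fderiv ℝ (fun p => bakryEmeryRic m φ p (e i) Z) x (e i)
        = A i - (1 / m) * (b i * z + a i * c i) := by
    intro i
    have h1 : HasFDerivAt (fun p => H p (e i) Z - (1 / m) * (f p (e i) * f p Z))
        ((T3.flip (e i)).flip Z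
          - (1 / m) • (f x (e i) • (H x).flip Z + f x Z • (H x).flip (e i))) x :=
      (hevalH (e i) Z).sub (((hevalf (e i)).mul (hevalf Z)).const_mul _)
    have h2 : (fun p => bakryEmeryRic m φ p (e i) Z)
        = fun p => H p (e i) Z - (1 / m) * (f p (e i) * f p Z) := by
      funext p
      rw [show bakryEmeryRic m φ p (e i) Z
        = H p (e i) Z - (1 / m) * f p (e i) * f p Z from rfl]
      ring
    rw [h2, h1.fderiv]
    simp only [ContinuousLinearMap.sub_apply, ContinuousLinearMap.flip_apply,
      ContinuousLinearMap.coe_smul', Pi.smul_apply, ContinuousLinearMap.add_apply,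
      smul_eq_mul]
    rw [hsymm12 (e i) (e i) Z, hsymm2 x (e i) (e i)]
    ring
  -- the Ric term at the gradient
  have hricg : bakryEmeryRic m φ x (gradient φ x) Z
      = (∑ i, a i * c i) - (1 / m) * (∑ i, a i * a i) * z := by
    rw [show bakryEmeryRic m φ x (gradient φ x) Z
      = H x (gradient φ x) Z - (1 / m) * f x (gradient φ x) * f x Z from rfl]
    rw [show H x (gradient φ x) Z = ((H x).flip Z) (gradient φ x) from rfl,
      hgrad ((H x).flip Z), hgrad (f x)]
    simp only [ContinuousLinearMap.flip_apply]
    rfl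
  -- the weighted Laplacian term
  have hwl : weightedLap φ φ x = (∑ i, b i) - ∑ i, a i * a i := by
    rw [show weightedLap φ φ x
      = (∑ i, H x (e i) (e i)) - ⟪gradient φ x, gradient φ x⟫ from rfl]
    rw [real_inner_self_eq_norm_sq, hnormsq x]
  -- assemble
  rw [show weightedDiv φ (bakryEmeryRic m φ) x Z
    = (∑ i, fderiv ℝ (fun p => bakryEmeryRic m φ p (e i) Z) x (e i))
      - bakryEmeryRic m φ x (gradient φ x) Z from rfl]
  rw [Finset.sum_congr rfl fun i _ => hric i, hricg, hws, hwl]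

  rw [Finset.sum_sub_distrib, ← Finset.mul_sum, Finset.sum_add_distrib,
    ← Finset.sum_mul, ← Finset.mul_sum]
  field_simp
  ring

end
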